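/- Let c ∈ (1,2) and ε ∈ (0, min{1/4, 2−c}). There exists C > 0 such that for all integers t ≥ 1 and all (ξ₁,ξ₂) in the box M̃_t = {|ξ₁| ≤ t^{2ε−1}, |ξ₂| ≤ t^{ε−c}}, we have |(1/t)∑_{n=1}^{t} e^{-2πi(ξ₂⌊n^c⌋ + ξ₁n)} − (1/t)∫_0^t e^{-2πi(ξ₂s^c + ξ₁s)} ds| ≤ C·t^{2ε−1}. -/

import Mathlib

/-!
Cut `[0, t]` into the unit intervals `[n - 1, n]` and compare the `n`-th term of the sum with the
integral over `[n - 1, n]`. Since `e` is `2π`-Lipschitz, the discrepancy is at most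
`2π (|ξ₁| + |ξ₂| |⌊n^c⌋ - s^c|)` for `s ∈ [n - 1, n]`, and `|⌊n^c⌋ - s^c| ≤ 1 + c t^(c-1)` by the
mean value theorem. On the box, `|ξ₂| t^(c-1) ≤ t^(ε-1) ≤ t^(2ε-1)`, so every unit interval
contributes `O(t^(2ε-1))`, and so does the average.
-/

open MeasureTheory intervalIntegral

noncomputable def e (x : ℝ) : ℂ := Complex.exp (2 * Real.pi * Complex.I * x)

lemma norm_e (x : ℝ) : ‖e x‖ = 1 := by
  rw [e, show 2 * Real.pi * Complex.I * x = ↑(2 * Real.pi * x) * Complex.I by push_cast; ring,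
    Complex.norm_exp_ofReal_mul_I]

lemma norm_e_sub_e_le (x y : ℝ) : ‖e x - e y‖ ≤ 2 * Real.pi * |x - y| := by
  have hfactor : e x - e y = e y * (Complex.exp (Complex.I * ↑(2 * Real.pi * (x - y))) - 1) := by
    simp only [e, mul_sub, mul_one, ← Complex.exp_add]
    push_cast
    ring_nf
  rw [hfactor, norm_mul, norm_e, one_mul]
  refine Real.norm_exp_I_mul_ofReal_sub_one_le.trans_eq ?_
  rw [Real.norm_eq_abs, abs_mul, abs_of_pos Real.two_pi_pos]

lemma rpow_sub_rpow_le_mul_sub {c a b : ℝ} (hc : 1 ≤ c) (ha : 0 ≤ a) (hab : a ≤ b) :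
    b ^ c - a ^ c ≤ c * b ^ (c - 1) * (b - a) := by
  have hderiv : ∀ x ∈ Set.Icc a b,
      HasDerivWithinAt (fun x : ℝ => x ^ c) (c * x ^ (c - 1)) (Set.Icc a b) x := fun _ _ =>
    (Real.hasDerivAt_rpow_const (Or.inr hc)).hasDerivWithinAt
  have hbound : ∀ x ∈ Set.Icc a b, ‖c * x ^ (c - 1)‖ ≤ c * b ^ (c - 1) := fun x hx => by
    have hx0 : 0 ≤ x := ha.trans hx.1
    rw [Real.norm_eq_abs, abs_of_nonneg (mul_nonneg (by linarith) (Real.rpow_nonneg hx0 _))]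
    exact mul_le_mul_of_nonneg_left (Real.rpow_le_rpow hx0 hx.2 (by linarith)) (by linarith)
  have := (convex_Icc a b).norm_image_sub_le_of_norm_hasDerivWithin_le hderiv hbound
    (Set.left_mem_Icc.mpr hab) (Set.right_mem_Icc.mpr hab)
  simp only [Real.norm_eq_abs, abs_of_nonneg (sub_nonneg.mpr hab)] at this
  exact (le_abs_self _).trans this

lemma abs_floor_rpow_sub_rpow_le {c x s : ℝ} (hc : 1 ≤ c) (hs : 0 ≤ s) (hsx : s ≤ x)
    (hxs : x ≤ s + 1) : |(⌊x ^ c⌋ : ℝ) - s ^ c| ≤ 1 + c * x ^ (c - 1) := by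
  have hx : 0 ≤ x ^ (c - 1) := Real.rpow_nonneg (hs.trans hsx) _
  have hmono : s ^ c ≤ x ^ c := Real.rpow_le_rpow hs hsx (by linarith)
  have hmvt : x ^ c - s ^ c ≤ c * x ^ (c - 1) :=
    (rpow_sub_rpow_le_mul_sub hc hs hsx).trans
      (mul_le_of_le_one_right (by positivity) (by linarith))
  have hfloor := Int.floor_le (x ^ c)
  have hfloor' := Int.lt_floor_add_one (x ^ c)
  rw [abs_le]
  constructor <;> linarith [mul_nonneg (by linarith : (0 : ℝ) ≤ c) hx]

lemma norm_e_floor_sub_e_le (c ξ₁ ξ₂ : ℝ) {x s : ℝ} (hc : 1 ≤ c) (hs : 0 ≤ s) (hsx : s ≤ x)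
    (hxs : x ≤ s + 1) :
    ‖e (-(ξ₂ * (⌊x ^ c⌋ : ℝ) + ξ₁ * x)) - e (-(ξ₂ * s ^ c + ξ₁ * s))‖ ≤
      2 * Real.pi * (|ξ₁| + |ξ₂| * (1 + c * x ^ (c - 1))) := by
  refine (norm_e_sub_e_le _ _).trans ?_
  gcongr
  calc |-(ξ₂ * (⌊x ^ c⌋ : ℝ) + ξ₁ * x) - -(ξ₂ * s ^ c + ξ₁ * s)|
      = |ξ₁ * (s - x) - ξ₂ * (⌊x ^ c⌋ - s ^ c)| := by ring_nf
    _ ≤ |ξ₁| * |s - x| + |ξ₂| * |(⌊x ^ c⌋ : ℝ) - s ^ c| := by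
        rw [← abs_mul, ← abs_mul]
        exact abs_sub _ _
    _ ≤ |ξ₁| * 1 + |ξ₂| * (1 + c * x ^ (c - 1)) := by
        gcongr
        · exact abs_le.mpr ⟨by linarith, by linarith⟩
        · exact abs_floor_rpow_sub_rpow_le hc hs hsx hxs
    _ = |ξ₁| + |ξ₂| * (1 + c * x ^ (c - 1)) := by rw [mul_one]

lemma norm_sum_Icc_sub_integral_le {E : Type*} [NormedAddCommGroup E] [NormedSpace ℝ E]
    [CompleteSpace E] {f : ℝ → E} (hf : Continuous f) (a : ℕ → E) {B : ℝ} (t : ℕ)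
    (h : ∀ n ∈ Finset.Icc 1 t, ∀ s ∈ Set.Ioc ((n : ℝ) - 1) n, ‖a n - f s‖ ≤ B) :
    ‖∑ n ∈ Finset.Icc 1 t, a n - ∫ s in (0 : ℝ)..t, f s‖ ≤ t * B := by
  have hsplit : ∫ s in (0 : ℝ)..t, f s = ∑ n ∈ Finset.Icc 1 t, ∫ s in ((n : ℝ) - 1)..n, f s := by
    have := sum_integral_adjacent_intervals_Ico (a := fun k : ℕ => (k : ℝ) - 1) (μ := volume)
      (Nat.le_add_left 1 t) fun _ _ => hf.intervalIntegrable _ _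
    rw [← Finset.Ico_add_one_right_eq_Icc]
    simpa using this.symm
  have hterm : ∀ n ∈ Finset.Icc 1 t, ‖a n - ∫ s in ((n : ℝ) - 1)..n, f s‖ ≤ B := by
    intro n hn
    have hconst : a n - ∫ s in ((n : ℝ) - 1)..n, f s = ∫ s in ((n : ℝ) - 1)..n, (a n - f s) := by
      rw [integral_sub intervalIntegrable_const (hf.intervalIntegrable _ _),
        intervalIntegral.integral_const]
      simp
    rw [hconst]
    refine (norm_integral_le_of_norm_le_const fun s hs => h n hn s ?_).trans_eq ?_
    · rwa [Set.uIoc_of_le (by linarith)] at hs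
    · simp
  calc ‖∑ n ∈ Finset.Icc 1 t, a n - ∫ s in (0 : ℝ)..t, f s‖
      = ‖∑ n ∈ Finset.Icc 1 t, (a n - ∫ s in ((n : ℝ) - 1)..n, f s)‖ := by
        rw [hsplit, Finset.sum_sub_distrib]
    _ ≤ ∑ n ∈ Finset.Icc 1 t, ‖a n - ∫ s in ((n : ℝ) - 1)..n, f s‖ := norm_sum_le _ _
    _ ≤ ∑ _n ∈ Finset.Icc 1 t, B := Finset.sum_le_sum hterm
    _ = t * B := by simp

lemma abs_add_abs_mul_one_add_rpow_le {c ε t ξ₁ ξ₂ : ℝ} (hc : 1 ≤ c) (hε : 0 ≤ ε) (ht : 1 ≤ t)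
    (hξ₁ : |ξ₁| ≤ t ^ (2 * ε - 1)) (hξ₂ : |ξ₂| ≤ t ^ (ε - c)) :
    |ξ₁| + |ξ₂| * (1 + c * t ^ (c - 1)) ≤ (2 + c) * t ^ (2 * ε - 1) := by
  have ht0 : 0 < t := by linarith
  have hsplit : t ^ (ε - c) * (1 + c * t ^ (c - 1)) = t ^ (ε - c) + c * t ^ (ε - 1) := by
    rw [mul_add, mul_one, mul_left_comm, ← Real.rpow_add ht0]
    ring_nf
  have h₁ : t ^ (ε - c) ≤ t ^ (2 * ε - 1) := Real.rpow_le_rpow_of_exponent_le ht (by linarith)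
  have h₂ : t ^ (ε - 1) ≤ t ^ (2 * ε - 1) := Real.rpow_le_rpow_of_exponent_le ht (by linarith)
  calc |ξ₁| + |ξ₂| * (1 + c * t ^ (c - 1))
      ≤ t ^ (2 * ε - 1) + t ^ (ε - c) * (1 + c * t ^ (c - 1)) := by gcongr
    _ ≤ (2 + c) * t ^ (2 * ε - 1) := by
        rw [hsplit]
        linarith [mul_le_mul_of_nonneg_left h₂ (by linarith : 0 ≤ c)]

theorem stmt7_general (c ε : ℝ) (hc1 : 1 < c) (hε1 : 0 < ε) :
    ∃ C > (0 : ℝ), ∀ (t : ℕ), 1 ≤ t → ∀ (ξ₁ ξ₂ : ℝ),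
      |ξ₁| ≤ (t : ℝ) ^ (2 * ε - 1) → |ξ₂| ≤ (t : ℝ) ^ (ε - c) →
      ‖((t : ℂ))⁻¹ * ∑ n ∈ Finset.Icc 1 t,
            e (-(ξ₂ * (⌊(n : ℝ) ^ c⌋ : ℝ) + ξ₁ * n)) -
          ((t : ℂ))⁻¹ * ∫ s in (0 : ℝ)..(t : ℝ), e (-(ξ₂ * s ^ c + ξ₁ * s))‖ ≤
        C * (t : ℝ) ^ (2 * ε - 1) := by
  refine ⟨2 * Real.pi * (2 + c), by positivity, fun t ht ξ₁ ξ₂ hξ₁ hξ₂ => ?_⟩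
  have ht1 : (1 : ℝ) ≤ t := by exact_mod_cast ht
  have hcont : Continuous fun s : ℝ => e (-(ξ₂ * s ^ c + ξ₁ * s)) := by
    have := Real.continuous_rpow_const (by linarith : 0 ≤ c)
    unfold e
    fun_prop
  have hterm : ∀ n ∈ Finset.Icc 1 t, ∀ s ∈ Set.Ioc ((n : ℝ) - 1) n,
      ‖e (-(ξ₂ * (⌊(n : ℝ) ^ c⌋ : ℝ) + ξ₁ * n)) - e (-(ξ₂ * s ^ c + ξ₁ * s))‖ ≤
        2 * Real.pi * (|ξ₁| + |ξ₂| * (1 + c * (t : ℝ) ^ (c - 1))) := by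
    intro n hn s hs
    have hn1 : (1 : ℝ) ≤ n := by exact_mod_cast (Finset.mem_Icc.mp hn).1
    have hnt : (n : ℝ) ≤ t := by exact_mod_cast (Finset.mem_Icc.mp hn).2
    refine (norm_e_floor_sub_e_le c ξ₁ ξ₂ hc1.le (by linarith [hs.1]) hs.2
      (by linarith [hs.1])).trans ?_
    gcongr
  rw [← mul_sub, norm_mul, norm_inv, Complex.norm_natCast]
  calc (t : ℝ)⁻¹ * ‖∑ n ∈ Finset.Icc 1 t, e (-(ξ₂ * (⌊(n : ℝ) ^ c⌋ : ℝ) + ξ₁ * n)) -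
        ∫ s in (0 : ℝ)..(t : ℝ), e (-(ξ₂ * s ^ c + ξ₁ * s))‖
      ≤ (t : ℝ)⁻¹ * (t * (2 * Real.pi * (|ξ₁| + |ξ₂| * (1 + c * (t : ℝ) ^ (c - 1))))) := by
        gcongr
        exact norm_sum_Icc_sub_integral_le hcont _ t hterm
    _ = 2 * Real.pi * (|ξ₁| + |ξ₂| * (1 + c * (t : ℝ) ^ (c - 1))) := by field_simp
    _ ≤ 2 * Real.pi * (2 + c) * (t : ℝ) ^ (2 * ε - 1) := by
        rw [mul_assoc _ (2 + c)]
        exact mul_le_mul_of_nonneg_left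
          (abs_add_abs_mul_one_add_rpow_le hc1.le hε1.le ht1 hξ₁ hξ₂) Real.two_pi_pos.le

theorem stmt7 (c ε : ℝ) (hc1 : 1 < c) (hc2 : c < 2)
    (hε1 : 0 < ε) (hε2 : ε < min (1/4) (2 - c)) :
    ∃ C > (0 : ℝ), ∀ (t : ℕ), 1 ≤ t → ∀ (ξ₁ ξ₂ : ℝ),
      |ξ₁| ≤ (t : ℝ) ^ (2 * ε - 1) → |ξ₂| ≤ (t : ℝ) ^ (ε - c) →
      ‖((t : ℂ))⁻¹ * ∑ n ∈ Finset.Icc 1 t,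
            e (-(ξ₂ * (⌊(n : ℝ) ^ c⌋ : ℝ) + ξ₁ * n)) -
          ((t : ℂ))⁻¹ * ∫ s in (0 : ℝ)..(t : ℝ), e (-(ξ₂ * s ^ c + ξ₁ * s))‖ ≤
        C * (t : ℝ) ^ (2 * ε - 1) :=
  stmt7_general c ε hc1 hε1
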